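/- arXiv:1203.0549 — 4 statements merged into one kernel-verified Lean document; each statement's English description precedes it below -/
import Mathlib

section
/- For any smooth ℝⁿ-valued function v on the circle S¹, the Gagliardo–Nirenberg inequality ‖v‖_{L⁴}⁴ ≤ C (‖v'‖_{L²}² + ‖v‖_{L²}²)^{1/2} · ‖v‖_{L²}³ holds, where C is a universal constant. -/
open Real MeasureTheory intervalIntegral

local notation "⟪" x ", " y "⟫" => @inner ℝ _ _ x y

/-- Gagliardo–Nirenberg interpolation inequality on the circle: there is a universal
constant `C > 0` such that for every smooth periodic `v : S¹ → ℝⁿ`,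
`‖v‖_{L⁴}⁴ ≤ C (‖v'‖_{L²}² + ‖v‖_{L²}²)^{1/2} ‖v‖_{L²}³`. -/
theorem stmt8 :
    ∃ C : ℝ, 0 < C ∧
      ∀ (n : ℕ) (v : ℝ → EuclideanSpace ℝ (Fin n)),
        ContDiff ℝ (⊤ : ℕ∞) v → Function.Periodic v (2 * π) →
          (∫ x in (0 : ℝ)..(2 * π), ‖v x‖ ^ 4)
            ≤ C * ((∫ x in (0 : ℝ)..(2 * π), ‖deriv v x‖ ^ 2)
                    + ∫ x in (0 : ℝ)..(2 * π), ‖v x‖ ^ 2) ^ ((1 : ℝ) / 2)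
                * (∫ x in (0 : ℝ)..(2 * π), ‖v x‖ ^ 2) ^ ((3 : ℝ) / 2) := by
  have hr2 : ∀ x : ℝ, x ^ (2:ℝ) = x ^ 2 := fun x => by
    rw [show (2:ℝ) = ((2:ℕ):ℝ) by norm_num, Real.rpow_natCast]
  refine ⟨3, by norm_num, ?_⟩
  intro n v hv _
  have hπ : (0:ℝ) < π := Real.pi_pos
  have h2π : (0:ℝ) < 2 * π := by positivity
  have hvc : Continuous v := hv.continuous
  have hvd : Differentiable ℝ v := hv.differentiable (by simp)
  have hv'c : Continuous (deriv v) := hv.continuous_deriv (by simp)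
  set f : ℝ → ℝ := fun x => ‖v x‖ ^ 2 with hfdef
  set g : ℝ → ℝ := fun x => 2 * ⟪v x, deriv v x⟫ with hgdef
  have hfc : Continuous f := (hvc.norm.pow 2)
  have hgc : Continuous g := continuous_const.mul (hvc.inner hv'c)
  have hfd : ∀ x, HasDerivAt f (g x) x := by
    intro x
    have h2 : (fun t => ⟪v t, v t⟫) = f := by
      funext t; exact real_inner_self_eq_norm_sq (v t)
    have h1 := ((hvd x).hasDerivAt).inner ℝ ((hvd x).hasDerivAt)
    rw [h2] at h1
    have h3 : g x = ⟪v x, deriv v x⟫ + ⟪deriv v x, v x⟫ := by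
      rw [real_inner_comm (v x) (deriv v x)]
      show 2 * ⟪v x, deriv v x⟫ = _
      ring
    rw [h3]
    exact h1
  set A : ℝ := ∫ x in (0:ℝ)..(2*π), ‖deriv v x‖ ^ 2 with hA
  set B : ℝ := ∫ x in (0:ℝ)..(2*π), ‖v x‖ ^ 2 with hB
  set D : ℝ := ∫ x in (0:ℝ)..(2*π), |g x| with hD
  have hAnn : 0 ≤ A := intervalIntegral.integral_nonneg h2π.le (fun x _ => by positivity)
  have hBnn : 0 ≤ B := intervalIntegral.integral_nonneg h2π.le (fun x _ => by positivity)
  have hDnn : 0 ≤ D := intervalIntegral.integral_nonneg h2π.le (fun x _ => abs_nonneg _)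
  -- sup bound
  have hsup : ∀ x ∈ Set.Icc (0:ℝ) (2*π), f x ≤ B / (2*π) + D := by
    intro x hx
    have key : ∀ y ∈ Set.Icc (0:ℝ) (2*π), f x ≤ f y + D := by
      intro y hy
      have hftc : ∫ t in y..x, g t = f x - f y := by
        apply intervalIntegral.integral_eq_sub_of_hasDerivAt (fun t _ => hfd t)
        exact hgc.intervalIntegrable _ _
      have hsub : Set.uIoc y x ⊆ Set.uIoc (0:ℝ) (2*π) := by
        rw [Set.uIoc_of_le h2π.le]
        intro t ht
        exact ⟨lt_of_le_of_lt (le_min hy.1 hx.1) ht.1, ht.2.trans (max_le hy.2 hx.2)⟩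
      have h1 : |∫ t in y..x, g t| ≤ |∫ t in y..x, (|g t|)| := by
        simpa using intervalIntegral.norm_integral_le_abs_integral_norm
          (f := g) (a := y) (b := x) (μ := volume)
      have h2 : |∫ t in y..x, (|g t|)| ≤ |∫ t in (0:ℝ)..(2*π), (|g t|)| := by
        apply intervalIntegral.abs_integral_mono_interval hsub
        · exact Filter.Eventually.of_forall (fun t => abs_nonneg _)
        · exact hgc.abs.intervalIntegrable _ _
      have h3 : |∫ t in (0:ℝ)..(2*π), (|g t|)| = D := abs_of_nonneg hDnn
      have h4 : f x - f y ≤ D := by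
        rw [← hftc]
        calc ∫ t in y..x, g t ≤ |∫ t in y..x, g t| := le_abs_self _
          _ ≤ D := by rw [← h3]; exact h1.trans h2
      linarith
    have hmono : (∫ _ in (0:ℝ)..(2*π), f x) ≤ ∫ y in (0:ℝ)..(2*π), (f y + D) :=
      intervalIntegral.integral_mono_on h2π.le intervalIntegrable_const
        ((hfc.intervalIntegrable _ _).add intervalIntegrable_const) key
    rw [intervalIntegral.integral_const, intervalIntegral.integral_add
        (hfc.intervalIntegrable _ _) intervalIntegrable_const,
      intervalIntegral.integral_const] at hmono
    simp only [smul_eq_mul, sub_zero] at hmono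
    rw [div_add' _ _ _ h2π.ne', le_div_iff₀ h2π]
    nlinarith [hmono]
  -- step 1 : ∫ ‖v‖⁴ ≤ M * B
  have hstep1 : (∫ x in (0:ℝ)..(2*π), ‖v x‖ ^ 4) ≤ (B / (2*π) + D) * B := by
    have hmono : (∫ x in (0:ℝ)..(2*π), ‖v x‖ ^ 4)
        ≤ ∫ x in (0:ℝ)..(2*π), (B / (2*π) + D) * f x := by
      apply intervalIntegral.integral_mono_on h2π.le
        ((hvc.norm.pow 4).intervalIntegrable _ _)
        ((continuous_const.mul hfc).intervalIntegrable _ _)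
      intro x hx
      have h1 := hsup x hx
      have h2 : ‖v x‖ ^ 4 = f x * f x := by simp only [hfdef]; ring
      have h3 : (0:ℝ) ≤ f x := by positivity
      show ‖v x‖ ^ 4 ≤ (B / (2*π) + D) * f x
      nlinarith
    rwa [intervalIntegral.integral_const_mul] at hmono
  -- Cauchy–Schwarz
  have hCS : (∫ x in (0:ℝ)..(2*π), ‖v x‖ * ‖deriv v x‖)
      ≤ B ^ ((1:ℝ)/2) * A ^ ((1:ℝ)/2) := by
    set μ := volume.restrict (Set.Ioc (0:ℝ) (2*π)) with hμ
    haveI : IsFiniteMeasure μ := by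
      constructor
      rw [hμ, Measure.restrict_apply_univ]
      exact measure_Ioc_lt_top
    obtain ⟨C1, hC1⟩ := isCompact_Icc.exists_bound_of_continuousOn
      (s := Set.Icc (0:ℝ) (2*π)) hvc.continuousOn
    obtain ⟨C2, hC2⟩ := isCompact_Icc.exists_bound_of_continuousOn
      (s := Set.Icc (0:ℝ) (2*π)) hv'c.continuousOn
    have hmem1 : MemLp (fun x => ‖v x‖) (ENNReal.ofReal 2) μ := by
      apply MemLp.of_bound hvc.norm.aestronglyMeasurable C1
      filter_upwards [ae_restrict_mem measurableSet_Ioc] with x hx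
      simpa using hC1 x (Set.Ioc_subset_Icc_self hx)
    have hmem2 : MemLp (fun x => ‖deriv v x‖) (ENNReal.ofReal 2) μ := by
      apply MemLp.of_bound hv'c.norm.aestronglyMeasurable C2
      filter_upwards [ae_restrict_mem measurableSet_Ioc] with x hx
      simpa using hC2 x (Set.Ioc_subset_Icc_self hx)
    have hH := integral_mul_le_Lp_mul_Lq_of_nonneg
      (⟨by norm_num, by norm_num, by norm_num⟩ : Real.HolderConjugate 2 2)
      (Filter.Eventually.of_forall (fun x => norm_nonneg _))
      (Filter.Eventually.of_forall (fun x => norm_nonneg _)) hmem1 hmem2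
    have hBe : B = ∫ a, ‖v a‖ ^ (2:ℝ) ∂μ := by
      rw [hB, intervalIntegral.integral_of_le h2π.le]
      exact integral_congr_ae (Filter.Eventually.of_forall (fun x => (hr2 _).symm))
    have hAe : A = ∫ a, ‖deriv v a‖ ^ (2:ℝ) ∂μ := by
      rw [hA, intervalIntegral.integral_of_le h2π.le]
      exact integral_congr_ae (Filter.Eventually.of_forall (fun x => (hr2 _).symm))
    rw [intervalIntegral.integral_of_le h2π.le, hBe, hAe]
    exact hH
  -- step 2 : D ≤ 2 √B √A
  have hstep2 : D ≤ 2 * (B ^ ((1:ℝ)/2) * A ^ ((1:ℝ)/2)) := by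
    have hst2a : D ≤ 2 * ∫ x in (0:ℝ)..(2*π), ‖v x‖ * ‖deriv v x‖ := by
      rw [← intervalIntegral.integral_const_mul]
      apply intervalIntegral.integral_mono_on h2π.le (hgc.abs.intervalIntegrable _ _)
        ((continuous_const.mul (hvc.norm.mul hv'c.norm)).intervalIntegrable _ _)
      intro x _
      have h1 : |⟪v x, deriv v x⟫| ≤ ‖v x‖ * ‖deriv v x‖ := abs_real_inner_le_norm _ _
      calc |g x| = 2 * |⟪v x, deriv v x⟫| := by
            simp only [hgdef, abs_mul]; norm_num
        _ ≤ 2 * (‖v x‖ * ‖deriv v x‖) := by linarith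
    calc D ≤ 2 * ∫ x in (0:ℝ)..(2*π), ‖v x‖ * ‖deriv v x‖ := hst2a
      _ ≤ 2 * (B ^ ((1:ℝ)/2) * A ^ ((1:ℝ)/2)) := by linarith [hCS]
  -- final algebra
  have e1 : B ^ ((1:ℝ)/2) * B ^ ((3:ℝ)/2) = B * B := by
    rw [← Real.rpow_add' hBnn (by norm_num : (1:ℝ)/2 + 3/2 ≠ 0)]
    rw [show (1:ℝ)/2 + 3/2 = 2 by norm_num, hr2]; ring
  have e2 : A ^ ((1:ℝ)/2) * B ^ ((3:ℝ)/2) = B ^ ((1:ℝ)/2) * A ^ ((1:ℝ)/2) * B := by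
    rw [show (3:ℝ)/2 = 1/2 + 1 by norm_num,
      Real.rpow_add' hBnn (by norm_num), Real.rpow_one]; ring
  have i1 : B ^ ((1:ℝ)/2) ≤ (A + B) ^ ((1:ℝ)/2) :=
    Real.rpow_le_rpow hBnn (le_add_of_nonneg_left hAnn) (by norm_num)
  have i2 : A ^ ((1:ℝ)/2) ≤ (A + B) ^ ((1:ℝ)/2) :=
    Real.rpow_le_rpow hAnn (le_add_of_nonneg_right hBnn) (by norm_num)
  have f32nn : (0:ℝ) ≤ B ^ ((3:ℝ)/2) := Real.rpow_nonneg hBnn _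
  have hdiv : B / (2*π) ≤ B := by
    apply div_le_self hBnn
    nlinarith [Real.pi_gt_three]
  calc (∫ x in (0:ℝ)..(2*π), ‖v x‖ ^ 4) ≤ (B / (2*π) + D) * B := hstep1
    _ ≤ (B + 2 * (B ^ ((1:ℝ)/2) * A ^ ((1:ℝ)/2))) * B :=
        mul_le_mul_of_nonneg_right (add_le_add hdiv hstep2) hBnn
    _ = B ^ ((1:ℝ)/2) * B ^ ((3:ℝ)/2) + 2 * (A ^ ((1:ℝ)/2) * B ^ ((3:ℝ)/2)) := by
        rw [e1, e2]; ring
    _ ≤ (A+B) ^ ((1:ℝ)/2) * B ^ ((3:ℝ)/2) + 2 * ((A+B) ^ ((1:ℝ)/2) * B ^ ((3:ℝ)/2)) := by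
        have t1 := mul_le_mul_of_nonneg_right i1 f32nn
        have t2 := mul_le_mul_of_nonneg_right i2 f32nn
        linarith
    _ = 3 * (A+B) ^ ((1:ℝ)/2) * B ^ ((3:ℝ)/2) := by ring
end

section
/- Let N be a locally Hermitian symmetric space and u : S¹ × (0,T) → N a smooth solution of the Schrödinger-Airy flow u_t = α J∇_x u_x + β(∇_x² u_x + (1/2) R(u_x, Ju_x)Ju_x). Then the pseudo-helicity E₂(u) = ∫_{S¹} ⟨∇_x u_x, J u_x⟩ dx is conserved in time. -/
open scoped RealInnerProductSpace
open Real

/-- An abstract model of the data attached to a smooth map `u : S¹ × ℝ → N` into a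
Riemannian manifold: sections of the pullback bundle `u⁻¹TN` (with fibers identified with
a fixed inner product space `V`), covariant derivatives `Dx`, `Dt`, the curvature `R` of
`N` along `u`, together with their standard properties (periodicity in `x`,
torsion-freeness, the commutation formula `∇ₜ∇ₓ − ∇ₓ∇ₜ = R(uₜ,uₓ)`, metric compatibility,
differentiation under the integral sign, and the curvature symmetries). -/
structure CovSystem (V : Type*) [NormedAddCommGroup V] [InnerProductSpace ℝ V] where
  Sec : Set (ℝ → ℝ → V)
  ux : ℝ → ℝ → V
  ut : ℝ → ℝ → V
  Dx : (ℝ → ℝ → V) → ℝ → ℝ → V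
  Dt : (ℝ → ℝ → V) → ℝ → ℝ → V
  R : ℝ → ℝ → V → V → V → V
  mem_ux : ux ∈ Sec
  mem_ut : ut ∈ Sec
  mem_Dx : ∀ s ∈ Sec, Dx s ∈ Sec
  mem_Dt : ∀ s ∈ Sec, Dt s ∈ Sec
  mem_R : ∀ a ∈ Sec, ∀ b ∈ Sec, ∀ c ∈ Sec,
    (fun t x => R t x (a t x) (b t x) (c t x)) ∈ Sec
  cont : ∀ s ∈ Sec, Continuous fun p : ℝ × ℝ => s p.1 p.2
  periodic : ∀ s ∈ Sec, ∀ t x, s t (x + 2 * π) = s t x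
  torsion : Dt ux = Dx ut
  comm : ∀ s ∈ Sec, ∀ t x,
    Dt (Dx s) t x - Dx (Dt s) t x = R t x (ut t x) (ux t x) (s t x)
  metric_x : ∀ s ∈ Sec, ∀ r ∈ Sec, ∀ t x,
    HasDerivAt (fun y => ⟪s t y, r t y⟫) (⟪Dx s t x, r t x⟫ + ⟪s t x, Dx r t x⟫) x
  metric_t : ∀ s ∈ Sec, ∀ r ∈ Sec, ∀ t x,
    HasDerivAt (fun τ => ⟪s τ x, r τ x⟫) (⟪Dt s t x, r t x⟫ + ⟪s t x, Dt r t x⟫) t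
  dint : ∀ s ∈ Sec, ∀ r ∈ Sec, ∀ t,
    HasDerivAt (fun τ => ∫ x in (0 : ℝ)..(2 * π), ⟪s τ x, r τ x⟫)
      (∫ x in (0 : ℝ)..(2 * π), (⟪Dt s t x, r t x⟫ + ⟪s t x, Dt r t x⟫)) t
  R_antisym : ∀ t x a b c, R t x a b c = -R t x b a c
  R_skew : ∀ t x a b c d, ⟪R t x a b c, d⟫ = -⟪R t x a b d, c⟫
  R_pair : ∀ t x a b c d, ⟪R t x a b c, d⟫ = ⟪R t x c d a, b⟫

/-- A `CovSystem` for a map into a Kähler manifold: in addition there is the complex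
structure `J` along `u`, which is an almost-complex structure (`J² = −1`), skew-adjoint
with respect to the metric, and parallel (`∇J = 0`, so it commutes with `Dx` and `Dt`). -/
structure KCovSystem (V : Type*) [NormedAddCommGroup V] [InnerProductSpace ℝ V]
    extends CovSystem V where
  J : ℝ → ℝ → V → V
  mem_J : ∀ s ∈ Sec, (fun t x => J t x (s t x)) ∈ Sec
  J_skew : ∀ t x v w, ⟪J t x v, w⟫ = -⟪v, J t x w⟫
  J_sq : ∀ t x v, J t x (J t x v) = -v
  J_par_x : ∀ s ∈ Sec, ∀ t x, Dx (fun t x => J t x (s t x)) t x = J t x (Dx s t x)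
  J_par_t : ∀ s ∈ Sec, ∀ t x, Dt (fun t x => J t x (s t x)) t x = J t x (Dt s t x)

/-!
Differentiating `E₂` in time and using `∇ₜ∇ₓuₓ = ∇ₓ²uₜ + R(uₜ, uₓ)uₓ` together with `∇J = 0`,
the integrand of `dE₂/dt` becomes `⟨∇ₓ²uₜ + R(uₜ, uₓ)uₓ, Juₓ⟩ + ⟨∇ₓuₓ, J∇ₓuₜ⟩`. Inserting the
flow equation, the symmetries of a Kähler curvature tensor and `∇R = 0` show that this is the
`x`-derivative of the periodic flux
`⟨∇ₓuₜ, Juₓ⟩ − 2⟨uₜ, J∇ₓuₓ⟩ + α|∇ₓuₓ|² + (α/4)⟨R(uₓ, Juₓ)Juₓ, uₓ⟩`,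
so it integrates to zero over `S¹`.
-/

theorem Function.Periodic.intervalIntegral_deriv_eq_zero {g g' : ℝ → ℝ} {T : ℝ}
    (hg : Function.Periodic g T) (hderiv : ∀ x ∈ Set.uIcc 0 T, HasDerivAt g (g' x) x)
    (hint : IntervalIntegrable g' MeasureTheory.volume 0 T) :
    ∫ x in (0 : ℝ)..T, g' x = 0 := by
  rw [intervalIntegral.integral_eq_sub_of_hasDerivAt hderiv hint, hg.eq, sub_self]

namespace CovSystem

variable {V : Type*} [NormedAddCommGroup V] [InnerProductSpace ℝ V] (F : CovSystem V)

def IsDxParallelR : Prop :=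
  ∀ a ∈ F.Sec, ∀ b ∈ F.Sec, ∀ c ∈ F.Sec, ∀ t x,
    F.Dx (fun t x => F.R t x (a t x) (b t x) (c t x)) t x
      = F.R t x (F.Dx a t x) (b t x) (c t x) + F.R t x (a t x) (F.Dx b t x) (c t x)
        + F.R t x (a t x) (b t x) (F.Dx c t x)

theorem continuous_inner {s r : ℝ → ℝ → V} (hs : s ∈ F.Sec) (hr : r ∈ F.Sec) (t : ℝ) :
    Continuous fun y => ⟪s t y, r t y⟫ :=
  let ht : Continuous fun y : ℝ => ((t, y) : ℝ × ℝ) := continuous_const.prodMk continuous_id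
  (((F.cont s hs).comp ht).inner ((F.cont r hr).comp ht))

theorem periodic_inner {s r : ℝ → ℝ → V} (hs : s ∈ F.Sec) (hr : r ∈ F.Sec) (t : ℝ) :
    Function.Periodic (fun y => ⟪s t y, r t y⟫) (2 * π) := fun y => by
  simp only [F.periodic s hs, F.periodic r hr]

theorem Dt_Dx_ux (t x : ℝ) :
    F.Dt (F.Dx F.ux) t x = F.Dx (F.Dx F.ut) t x + F.R t x (F.ut t x) (F.ux t x) (F.ux t x) := by
  rw [← F.torsion, ← F.comm _ F.mem_ux, add_sub_cancel]

end CovSystem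

namespace KCovSystem

variable {V : Type*} [NormedAddCommGroup V] [InnerProductSpace ℝ V] (F : KCovSystem V)

def IsSchrodingerAiry (α β : ℝ) : Prop :=
  ∀ t x, F.ut t x
    = α • F.J t x (F.Dx F.ux t x)
      + β • (F.Dx (F.Dx F.ux) t x
        + (1 / 2 : ℝ) • F.R t x (F.ux t x) (F.J t x (F.ux t x)) (F.J t x (F.ux t x)))

def IsKahlerCurvature : Prop :=
  ∀ t x a b c d, ⟪F.R t x a b c, F.J t x d⟫ = -⟪F.R t x a b (F.J t x c), d⟫

theorem inner_self_J (t x : ℝ) (v : V) : ⟪v, F.J t x v⟫ = 0 := by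
  have h := F.J_skew t x v v
  rw [real_inner_comm] at h
  linarith

theorem inner_J_J (t x : ℝ) (v w : V) : ⟪F.J t x v, F.J t x w⟫ = ⟪v, w⟫ := by
  rw [F.J_skew, F.J_sq, inner_neg_right, neg_neg]

theorem inner_J_right (t x : ℝ) (v w : V) : ⟪v, F.J t x w⟫ = -⟪w, F.J t x v⟫ := by
  rw [← neg_eq_iff_eq_neg.mpr (F.J_skew t x w v), neg_neg, real_inner_comm]

theorem Dt_J_ux (t x : ℝ) :
    F.Dt (fun t x => F.J t x (F.ux t x)) t x = F.J t x (F.Dx F.ut t x) := by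
  rw [F.J_par_t _ F.mem_ux, F.torsion]

section Pointwise

variable {F} {t x : ℝ}

theorem inner_R_J_J (hRJ : F.IsKahlerCurvature) (a b c d : V) :
    ⟪F.R t x a b (F.J t x c), F.J t x d⟫ = ⟪F.R t x a b c, d⟫ := by
  have h := hRJ t x a b c (F.J t x d)
  rw [F.J_sq, inner_neg_right] at h
  linarith

theorem inner_R_linearized (hRJ : F.IsKahlerCurvature) (u w : V) :
    ⟪F.R t x w (F.J t x u) (F.J t x u) + F.R t x u (F.J t x w) (F.J t x u)
        + F.R t x u (F.J t x u) (F.J t x w), u⟫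
      = 3 * ⟪F.R t x u (F.J t x u) (F.J t x u), w⟫ := by
  have h₃ : ⟪F.R t x u (F.J t x u) (F.J t x w), u⟫ = ⟪F.R t x u (F.J t x u) (F.J t x u), w⟫ := by
    rw [F.R_skew, hRJ, neg_neg]
  have h₂ : ⟪F.R t x u (F.J t x w) (F.J t x u), u⟫ = ⟪F.R t x u (F.J t x u) (F.J t x u), w⟫ := by
    rw [F.R_pair, F.R_antisym, inner_neg_left, hRJ, neg_neg]
  have h₁ : ⟪F.R t x w (F.J t x u) (F.J t x u), u⟫ = ⟪F.R t x u (F.J t x u) (F.J t x u), w⟫ := by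
    rw [F.R_pair, F.R_antisym, inner_neg_left, hRJ, neg_neg, h₃]
  rw [inner_add_left, inner_add_left, h₁, h₂, h₃]
  ring

-- `u, w, dw, v, dv, ddv` stand for `uₓ, ∇ₓuₓ, ∇ₓ²uₓ, uₜ, ∇ₓuₜ, ∇ₓ²uₜ` at the point `(t, x)`.
variable {α β : ℝ} {u w dw v : V}

theorem inner_J_of_flow
    (hv : v = α • F.J t x w + β • (dw + (1 / 2 : ℝ) • F.R t x u (F.J t x u) (F.J t x u))) :
    ⟪v, F.J t x dw⟫ = α * ⟪w, dw⟫ + β / 2 * ⟪F.R t x u (F.J t x u) (F.J t x u), F.J t x dw⟫ := by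
  rw [hv, inner_add_left, real_inner_smul_left, real_inner_smul_left, inner_add_left,
    real_inner_smul_left, F.inner_J_J, F.inner_self_J]
  ring

theorem inner_R_of_flow (hRJ : F.IsKahlerCurvature)
    (hv : v = α • F.J t x w + β • (dw + (1 / 2 : ℝ) • F.R t x u (F.J t x u) (F.J t x u))) :
    ⟪F.R t x v u u, F.J t x u⟫
      = α * ⟪F.R t x u (F.J t x u) (F.J t x u), w⟫
        - β * ⟪F.R t x u (F.J t x u) (F.J t x u), F.J t x dw⟫ := by
  rw [hRJ, F.R_pair, F.R_antisym, inner_neg_left, neg_neg, F.R_skew, hv, inner_add_right,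
    real_inner_smul_right, real_inner_smul_right, inner_add_right, real_inner_smul_right,
    hRJ, ← inner_R_J_J hRJ _ _ u dw, ← inner_R_J_J hRJ _ _ u, F.inner_self_J]
  ring

theorem flux_derivative_eq_of_flow (hRJ : F.IsKahlerCurvature)
    (hv : v = α • F.J t x w + β • (dw + (1 / 2 : ℝ) • F.R t x u (F.J t x u) (F.J t x u)))
    (dv ddv : V) :
    ⟪ddv, F.J t x u⟫ + ⟪dv, F.J t x w⟫ - 2 * (⟪dv, F.J t x w⟫ + ⟪v, F.J t x dw⟫)
      + α * (⟪dw, w⟫ + ⟪w, dw⟫)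
      + α / 4 * (⟪F.R t x w (F.J t x u) (F.J t x u) + F.R t x u (F.J t x w) (F.J t x u)
            + F.R t x u (F.J t x u) (F.J t x w), u⟫
          + ⟪F.R t x u (F.J t x u) (F.J t x u), w⟫)
      = ⟪ddv + F.R t x v u u, F.J t x u⟫ + ⟪w, F.J t x dv⟫ := by
  rw [inner_R_linearized hRJ, inner_add_left, inner_R_of_flow hRJ hv, inner_J_of_flow hv,
    F.inner_J_right t x w dv, real_inner_comm dw]
  ring

end Pointwise

noncomputable def pseudoHelicity (t : ℝ) : ℝ :=
  ∫ x in (0 : ℝ)..(2 * π), ⟪F.Dx F.ux t x, F.J t x (F.ux t x)⟫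

noncomputable def helicityFlux (α t y : ℝ) : ℝ :=
  ⟪F.Dx F.ut t y, F.J t y (F.ux t y)⟫ - 2 * ⟪F.ut t y, F.J t y (F.Dx F.ux t y)⟫
    + α * ⟪F.Dx F.ux t y, F.Dx F.ux t y⟫
    + α / 4 * ⟪F.R t y (F.ux t y) (F.J t y (F.ux t y)) (F.J t y (F.ux t y)), F.ux t y⟫

theorem periodic_helicityFlux (α t : ℝ) : Function.Periodic (F.helicityFlux α t) (2 * π) :=
  have hu := F.mem_ux
  have hw := F.mem_Dx _ hu
  have hJu := F.mem_J _ hu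
  (((F.periodic_inner (F.mem_Dx _ F.mem_ut) hJu t).sub
      ((F.periodic_inner F.mem_ut (F.mem_J _ hw) t).smul (2 : ℝ))).add
    ((F.periodic_inner hw hw t).smul α)).add
    ((F.periodic_inner (F.mem_R _ hu _ hJu _ hJu) hu t).smul (α / 4))

theorem hasDerivAt_helicityFlux {α β : ℝ} (hRx : F.IsDxParallelR) (hRJ : F.IsKahlerCurvature)
    (hflow : F.IsSchrodingerAiry α β) (t x : ℝ) :
    HasDerivAt (F.helicityFlux α t)
      (⟪F.Dt (F.Dx F.ux) t x, F.J t x (F.ux t x)⟫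
        + ⟪F.Dx F.ux t x, F.Dt (fun t x => F.J t x (F.ux t x)) t x⟫) x := by
  have hu := F.mem_ux
  have hw := F.mem_Dx _ hu
  have hJu := F.mem_J _ hu
  have hderiv :=
    (((F.metric_x _ (F.mem_Dx _ F.mem_ut) _ hJu t x).sub
        ((F.metric_x _ F.mem_ut _ (F.mem_J _ hw) t x).const_mul (2 : ℝ))).add
      ((F.metric_x _ hw _ hw t x).const_mul α)).add
      ((F.metric_x _ (F.mem_R _ hu _ hJu _ hJu) _ hu t x).const_mul (α / 4))
  refine hderiv.congr_deriv ?_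
  rw [F.J_par_x _ hu, F.J_par_x _ hw, hRx _ hu _ hJu _ hJu, F.J_par_x _ hu, F.Dt_Dx_ux,
    F.Dt_J_ux]
  exact flux_derivative_eq_of_flow hRJ (hflow t x) _ _

theorem hasDerivAt_pseudoHelicity {α β : ℝ} (hRx : F.IsDxParallelR) (hRJ : F.IsKahlerCurvature)
    (hflow : F.IsSchrodingerAiry α β) (t : ℝ) : HasDerivAt F.pseudoHelicity 0 t := by
  have hw := F.mem_Dx _ F.mem_ux
  have hJu := F.mem_J _ F.mem_ux
  refine (F.dint _ hw _ hJu t).congr_deriv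
    ((F.periodic_helicityFlux α t).intervalIntegral_deriv_eq_zero
      (fun x _ => F.hasDerivAt_helicityFlux hRx hRJ hflow t x) ?_)
  exact ((F.continuous_inner (F.mem_Dt _ hw) hJu t).add
    (F.continuous_inner hw (F.mem_Dt _ hJu) t)).intervalIntegrable _ _

end KCovSystem

theorem stmt12_general {V : Type*} [NormedAddCommGroup V] [InnerProductSpace ℝ V]
    (F : KCovSystem V) (α β : ℝ)
    (hRx : ∀ a ∈ F.Sec, ∀ b ∈ F.Sec, ∀ c ∈ F.Sec, ∀ t x,
      F.Dx (fun t x => F.R t x (a t x) (b t x) (c t x)) t x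
        = F.R t x (F.Dx a t x) (b t x) (c t x) + F.R t x (a t x) (F.Dx b t x) (c t x)
          + F.R t x (a t x) (b t x) (F.Dx c t x))
    (hRJ : ∀ t x a b c d, ⟪F.R t x a b c, F.J t x d⟫ = -⟪F.R t x a b (F.J t x c), d⟫)
    (hflow : ∀ t x, F.ut t x
      = α • F.J t x (F.Dx F.ux t x)
        + β • (F.Dx (F.Dx F.ux) t x
          + (1 / 2 : ℝ) • F.R t x (F.ux t x) (F.J t x (F.ux t x)) (F.J t x (F.ux t x)))) :
    ∀ t₁ t₂ : ℝ,
      (∫ x in (0 : ℝ)..(2 * π), ⟪F.Dx F.ux t₁ x, F.J t₁ x (F.ux t₁ x)⟫)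
        = ∫ x in (0 : ℝ)..(2 * π), ⟪F.Dx F.ux t₂ x, F.J t₂ x (F.ux t₂ x)⟫ := by
  have hderiv := F.hasDerivAt_pseudoHelicity hRx hRJ hflow
  exact is_const_of_deriv_eq_zero (fun t => (hderiv t).differentiableAt)
    (fun t => (hderiv t).deriv)

/-- On a locally Hermitian symmetric space, along any smooth solution of the
Schrödinger–Airy flow `uₜ = α J∇ₓuₓ + β(∇ₓ²uₓ + (1/2) R(uₓ, Juₓ)Juₓ)`, the
pseudo-helicity `E₂(u) = ∫ ⟨∇ₓuₓ, Juₓ⟩ dx` is conserved. -/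
theorem stmt12 {V : Type*} [NormedAddCommGroup V] [InnerProductSpace ℝ V]
    (F : KCovSystem V) (α β : ℝ)
    (hRx : ∀ a ∈ F.Sec, ∀ b ∈ F.Sec, ∀ c ∈ F.Sec, ∀ t x,
      F.Dx (fun t x => F.R t x (a t x) (b t x) (c t x)) t x
        = F.R t x (F.Dx a t x) (b t x) (c t x) + F.R t x (a t x) (F.Dx b t x) (c t x)
          + F.R t x (a t x) (b t x) (F.Dx c t x))
    (hRt : ∀ a ∈ F.Sec, ∀ b ∈ F.Sec, ∀ c ∈ F.Sec, ∀ t x,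
      F.Dt (fun t x => F.R t x (a t x) (b t x) (c t x)) t x
        = F.R t x (F.Dt a t x) (b t x) (c t x) + F.R t x (a t x) (F.Dt b t x) (c t x)
          + F.R t x (a t x) (b t x) (F.Dt c t x))
    (hRJ : ∀ t x a b c d, ⟪F.R t x a b c, F.J t x d⟫ = -⟪F.R t x a b (F.J t x c), d⟫)
    (hflow : ∀ t x, F.ut t x
      = α • F.J t x (F.Dx F.ux t x)
        + β • (F.Dx (F.Dx F.ux) t x
          + (1 / 2 : ℝ) • F.R t x (F.ux t x) (F.J t x (F.ux t x)) (F.J t x (F.ux t x)))) :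
    ∀ t₁ t₂ : ℝ,
      (∫ x in (0 : ℝ)..(2 * π), ⟪F.Dx F.ux t₁ x, F.J t₁ x (F.ux t₁ x)⟫)
        = ∫ x in (0 : ℝ)..(2 * π), ⟪F.Dx F.ux t₂ x, F.J t₂ x (F.ux t₂ x)⟫ :=
  stmt12_general F α β hRx hRJ hflow
end

section
/- Let N be a locally Hermitian symmetric space and u : S¹ × (0,T) → N a smooth solution of the Schrödinger-Airy flow u_t = α J∇_x u_x + β(∇_x² u_x + (1/2) R(u_x, Ju_x)Ju_x). Then d/dt [∫ |∇_x u_x|² dx − (1/4)∫ ⟨u_x, R(u_x, Ju_x)Ju_x⟩ dx] = β ∫ ⟨R(∇_x u_x, u_x)u_x, R(u_x, Ju_x)Ju_x⟩ dx. -/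
open scoped RealInnerProductSpace
open Real

/-
The time derivative of `E₃` along an arbitrary variation is the `L²` pairing of `uₜ` with the
gradient `2∇ₓ³uₓ + 2R(∇ₓuₓ, uₓ)uₓ + ∇ₓ(R(uₓ, Juₓ)Juₓ)`: this uses the commutation formula,
`∇R = 0`, `∇J = 0` and integration by parts on the circle. Along the flow, the Schrödinger part
`J∇ₓuₓ` pairs to zero with this gradient, and in the pairing with the Airy part
`∇ₓ²uₓ + ½R(uₓ, Juₓ)Juₓ` everything cancels, after integrating by parts, except
`⟨R(∇ₓuₓ, uₓ)uₓ, R(uₓ, Juₓ)Juₓ⟩`.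
-/

section L2Inner

variable {V : Type*} [NormedAddCommGroup V] [InnerProductSpace ℝ V]

noncomputable def l2Inner (f g : ℝ → V) : ℝ := ∫ x in (0 : ℝ)..(2 * π), ⟪f x, g x⟫

variable {f f' g g' : ℝ → V}

lemma l2Inner_congr (h : ∀ x, ⟪f x, g x⟫ = ⟪f' x, g' x⟫) : l2Inner f g = l2Inner f' g' :=
  intervalIntegral.integral_congr fun x _ => h x

lemma l2Inner_eq_zero (h : ∀ x, ⟪f x, g x⟫ = 0) : l2Inner f g = 0 := by
  simp [l2Inner, h]

lemma l2Inner_comm (f g : ℝ → V) : l2Inner f g = l2Inner g f :=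
  l2Inner_congr fun _ => real_inner_comm _ _

lemma l2Inner_smul_left (c : ℝ) (f g : ℝ → V) : l2Inner (c • f) g = c * l2Inner f g := by
  simp only [l2Inner, Pi.smul_apply, real_inner_smul_left, intervalIntegral.integral_const_mul]

lemma l2Inner_smul_right (c : ℝ) (f g : ℝ → V) : l2Inner f (c • g) = c * l2Inner f g := by
  rw [l2Inner_comm, l2Inner_smul_left, l2Inner_comm]

lemma l2Inner_add_left (hf : Continuous f) (hf' : Continuous f') (hg : Continuous g) :
    l2Inner (f + f') g = l2Inner f g + l2Inner f' g := by
  simp only [l2Inner, Pi.add_apply, inner_add_left]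
  exact intervalIntegral.integral_add ((hf.inner hg).intervalIntegrable _ _)
    ((hf'.inner hg).intervalIntegrable _ _)

lemma l2Inner_add_right (hf : Continuous f) (hg : Continuous g) (hg' : Continuous g') :
    l2Inner f (g + g') = l2Inner f g + l2Inner f g' := by
  rw [l2Inner_comm, l2Inner_add_left hg hg' hf, l2Inner_comm g, l2Inner_comm g']

end L2Inner

namespace CovSystem

variable {V : Type*} [NormedAddCommGroup V] [InnerProductSpace ℝ V] (F : CovSystem V)

/-- `∇R = 0` in the direction of the covariant derivative `D`. -/
def IsParallelCurvature (D : (ℝ → ℝ → V) → ℝ → ℝ → V) : Prop :=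
  ∀ a ∈ F.Sec, ∀ b ∈ F.Sec, ∀ c ∈ F.Sec, ∀ t x,
    D (fun t x => F.R t x (a t x) (b t x) (c t x)) t x
      = F.R t x (D a t x) (b t x) (c t x) + F.R t x (a t x) (D b t x) (c t x)
        + F.R t x (a t x) (b t x) (D c t x)

def dxCurv : ℝ → ℝ → V := fun t x => F.R t x (F.Dx F.ux t x) (F.ux t x) (F.ux t x)

lemma mem_dxCurv : F.dxCurv ∈ F.Sec :=
  F.mem_R _ (F.mem_Dx _ F.mem_ux) _ F.mem_ux _ F.mem_ux

variable {F}

lemma continuous_slice {s : ℝ → ℝ → V} (hs : s ∈ F.Sec) (t : ℝ) : Continuous (s t) :=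
  (F.cont s hs).comp (continuous_const.prodMk continuous_id)

section Curvature

variable (F) (t x : ℝ)

lemma inner_R_self (a b c : V) : ⟪F.R t x a b c, c⟫ = 0 := by
  linarith [F.R_skew t x a b c c]

lemma inner_R_self_left (a c d : V) : ⟪F.R t x a a c, d⟫ = 0 := by
  have h : ⟪F.R t x a a c, d⟫ = -⟪F.R t x a a c, d⟫ := by
    conv_lhs => rw [F.R_antisym]
    exact inner_neg_left _ _
  linarith

lemma inner_R_neg (a b c d : V) : ⟪F.R t x a b (-c), d⟫ = -⟪F.R t x a b c, d⟫ := by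
  rw [F.R_skew, inner_neg_right, neg_neg, F.R_skew t x a b c d, neg_neg]

lemma inner_R_comm (a b c : V) : ⟪F.R t x a b b, c⟫ = ⟪F.R t x c b b, a⟫ := by
  rw [F.R_pair, F.R_skew, F.R_antisym t x b c, inner_neg_left, neg_neg]

end Curvature

section Integration

variable {s r : ℝ → ℝ → V}

lemma hasDerivAt_l2Inner (hs : s ∈ F.Sec) (hr : r ∈ F.Sec) (t : ℝ) :
    HasDerivAt (fun τ => l2Inner (s τ) (r τ))
      (l2Inner (F.Dt s t) (r t) + l2Inner (s t) (F.Dt r t)) t := by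
  have h := F.dint s hs r hr t
  rwa [intervalIntegral.integral_add
    (((continuous_slice (F.mem_Dt s hs) t).inner (continuous_slice hr t)).intervalIntegrable _ _)
    (((continuous_slice hs t).inner (continuous_slice (F.mem_Dt r hr) t)).intervalIntegrable _ _)]
    at h

lemma l2Inner_Dx_left (hs : s ∈ F.Sec) (hr : r ∈ F.Sec) (t : ℝ) :
    l2Inner (F.Dx s t) (r t) = -l2Inner (s t) (F.Dx r t) := by
  have hsx := continuous_slice hs t
  have hrx := continuous_slice hr t
  have hsx' := continuous_slice (F.mem_Dx s hs) t
  have hrx' := continuous_slice (F.mem_Dx r hr) t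
  have hsum : l2Inner (F.Dx s t) (r t) + l2Inner (s t) (F.Dx r t) = 0 := by
    rw [l2Inner, l2Inner, ← intervalIntegral.integral_add
      ((hsx'.inner hrx).intervalIntegrable _ _) ((hsx.inner hrx').intervalIntegrable _ _),
      intervalIntegral.integral_eq_sub_of_hasDerivAt (fun x _ => F.metric_x s hs r hr t x)
        (((hsx'.inner hrx).add (hsx.inner hrx')).intervalIntegrable _ _)]
    rw [← zero_add (2 * π), F.periodic s hs, F.periodic r hr, sub_self]
  linarith

lemma l2Inner_Dx_self (hs : s ∈ F.Sec) (t : ℝ) : l2Inner (F.Dx s t) (s t) = 0 := by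
  linarith [l2Inner_Dx_left hs hs t, l2Inner_comm (s t) (F.Dx s t)]

end Integration

lemma l2Inner_Dt_Dx_ux (t : ℝ) :
    l2Inner (F.Dt (F.Dx F.ux) t) (F.Dx F.ux t)
      = l2Inner (F.ut t) (F.Dx (F.Dx (F.Dx F.ux)) t) + l2Inner (F.ut t) (F.dxCurv t) := by
  have hux := F.mem_ux
  have hut := F.mem_ut
  have hcomm : F.Dt (F.Dx F.ux) t
      = F.Dx (F.Dx F.ut) t + fun x => F.R t x (F.ut t x) (F.ux t x) (F.ux t x) := by
    funext x
    rw [Pi.add_apply, ← F.comm _ hux, F.torsion, add_sub_cancel]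
  rw [hcomm, l2Inner_add_left (continuous_slice (F.mem_Dx _ (F.mem_Dx _ hut)) t)
    (continuous_slice (F.mem_R _ hut _ hux _ hux) t) (continuous_slice (F.mem_Dx _ hux) t),
    l2Inner_Dx_left (F.mem_Dx _ hut) (F.mem_Dx _ hux),
    l2Inner_Dx_left hut (F.mem_Dx _ (F.mem_Dx _ hux)), neg_neg]
  congr 1
  exact l2Inner_congr fun x => by rw [inner_R_comm, real_inner_comm]; rfl

lemma l2Inner_Dx_Dx_ux_dxCurv (hRx : F.IsParallelCurvature F.Dx) (t : ℝ) :
    l2Inner (F.Dx (F.Dx F.ux) t) (F.dxCurv t) = 0 := by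
  have hux := F.mem_ux
  have hw := F.mem_Dx _ hux
  have hibp := l2Inner_Dx_left F.mem_dxCurv hw t
  have hpt : l2Inner (F.Dx F.dxCurv t) (F.Dx F.ux t)
      = l2Inner (F.dxCurv t) (F.Dx (F.Dx F.ux) t) := l2Inner_congr fun x => by
    unfold dxCurv
    rw [hRx _ hw _ hux _ hux, inner_add_left, inner_add_left, inner_R_comm,
      inner_R_self_left, inner_R_self, add_zero, add_zero]
  rw [l2Inner_comm]
  linarith

end CovSystem

namespace KCovSystem

open CovSystem

variable {V : Type*} [NormedAddCommGroup V] [InnerProductSpace ℝ V] (F : KCovSystem V)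

/-- As `J` is skew-adjoint, this says `R(a, b) ∘ J = J ∘ R(a, b)`. -/
def RCommutesJ : Prop :=
  ∀ t x a b c d, ⟪F.R t x a b c, F.J t x d⟫ = -⟪F.R t x a b (F.J t x c), d⟫

def jCurv : ℝ → ℝ → V :=
  fun t x => F.R t x (F.ux t x) (F.J t x (F.ux t x)) (F.J t x (F.ux t x))

noncomputable def energy3 (t : ℝ) : ℝ :=
  l2Inner (F.Dx F.ux t) (F.Dx F.ux t) - (1 / 4 : ℝ) * l2Inner (F.ux t) (F.jCurv t)

def gradEnergy3 : ℝ → ℝ → V :=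
  (2 : ℝ) • F.Dx (F.Dx (F.Dx F.ux)) + (2 : ℝ) • F.dxCurv + F.Dx F.jCurv

lemma mem_jCurv : F.jCurv ∈ F.Sec :=
  F.mem_R _ F.mem_ux _ (F.mem_J _ F.mem_ux) _ (F.mem_J _ F.mem_ux)

variable {F}

section Curvature

variable (t x : ℝ)

lemma inner_J_self (v : V) : ⟪F.J t x v, v⟫ = 0 := by
  linarith [F.J_skew t x v v, real_inner_comm (F.J t x v) v]

lemma inner_variation_jCurv (hRJ : F.RCommutesJ) (v z : V) :
    ⟪v, F.R t x z (F.J t x v) (F.J t x v)⟫ + ⟪v, F.R t x v (F.J t x z) (F.J t x v)⟫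
      + ⟪v, F.R t x v (F.J t x v) (F.J t x z)⟫
      = 3 * ⟪z, F.R t x v (F.J t x v) (F.J t x v)⟫ := by
  have hA : ⟪v, F.R t x z (F.J t x v) (F.J t x v)⟫ = ⟪z, F.R t x v (F.J t x v) (F.J t x v)⟫ := by
    rw [real_inner_comm, F.R_pair, F.R_skew, F.R_antisym, inner_neg_left, neg_neg,
      real_inner_comm]
  have hB : ⟪v, F.R t x v (F.J t x z) (F.J t x v)⟫ = ⟪z, F.R t x v (F.J t x v) (F.J t x v)⟫ := by
    rw [real_inner_comm, F.R_pair, hRJ, F.R_antisym, inner_neg_left, neg_neg, real_inner_comm]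
  have hC : ⟪v, F.R t x v (F.J t x v) (F.J t x z)⟫ = ⟪z, F.R t x v (F.J t x v) (F.J t x v)⟫ := by
    rw [real_inner_comm, F.R_skew, hRJ, neg_neg, real_inner_comm]
  rw [hA, hB, hC]
  ring

lemma inner_J_variation_jCurv (hRJ : F.RCommutesJ) (v w : V) :
    ⟪F.J t x w, F.R t x w (F.J t x v) (F.J t x v)⟫ + ⟪F.J t x w, F.R t x v (F.J t x w) (F.J t x v)⟫
      + ⟪F.J t x w, F.R t x v (F.J t x v) (F.J t x w)⟫
      = -2 * ⟪F.J t x w, F.R t x w v v⟫ := by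
  have h0 : ⟪F.J t x w, F.R t x w v v⟫ = -⟪F.R t x w v (F.J t x v), w⟫ := by
    rw [real_inner_comm, hRJ]
  have h1 : ⟪F.J t x w, F.R t x w (F.J t x v) (F.J t x v)⟫ = ⟪F.R t x w v (F.J t x v), w⟫ := by
    rw [real_inner_comm, hRJ, F.J_sq, F.inner_R_neg, neg_neg, F.R_skew, F.R_pair, F.R_skew,
      neg_neg]
  have h2 : ⟪F.J t x w, F.R t x v (F.J t x w) (F.J t x v)⟫ = ⟪F.R t x w v (F.J t x v), w⟫ := by
    rw [real_inner_comm, hRJ, F.J_sq, F.inner_R_neg, neg_neg, F.R_pair, hRJ, F.R_antisym,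
      inner_neg_left, neg_neg]
  have h3 : ⟪F.J t x w, F.R t x v (F.J t x v) (F.J t x w)⟫ = 0 := by
    rw [real_inner_comm, F.inner_R_self]
  rw [h0, h1, h2, h3]
  ring

end Curvature

lemma continuous_gradEnergy3 (t : ℝ) : Continuous (F.gradEnergy3 t) :=
  (((continuous_slice (F.mem_Dx _ (F.mem_Dx _ (F.mem_Dx _ F.mem_ux))) t).const_smul (2 : ℝ)).add
    ((continuous_slice F.mem_dxCurv t).const_smul (2 : ℝ))).add
    (continuous_slice (F.mem_Dx _ F.mem_jCurv) t)

lemma l2Inner_gradEnergy3 {f : ℝ → V} (hf : Continuous f) (t : ℝ) :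
    l2Inner f (F.gradEnergy3 t)
      = 2 * l2Inner f (F.Dx (F.Dx (F.Dx F.ux)) t) + 2 * l2Inner f (F.dxCurv t)
        + l2Inner f (F.Dx F.jCurv t) := by
  have h3 := continuous_slice (F.mem_Dx _ (F.mem_Dx _ (F.mem_Dx _ F.mem_ux))) t
  have hR := continuous_slice F.mem_dxCurv t
  have hQ := continuous_slice (F.mem_Dx _ F.mem_jCurv) t
  simp only [gradEnergy3, Pi.add_apply, Pi.smul_apply]
  rw [l2Inner_add_right hf ((h3.const_smul _).add (hR.const_smul _)) hQ,
    l2Inner_add_right hf (h3.const_smul _) (hR.const_smul _), l2Inner_smul_right,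
    l2Inner_smul_right]

lemma l2Inner_Dt_jCurv (hRt : F.IsParallelCurvature F.Dt) (hRJ : F.RCommutesJ) (t : ℝ) :
    l2Inner (F.Dt F.ux t) (F.jCurv t) + l2Inner (F.ux t) (F.Dt F.jCurv t)
      = -4 * l2Inner (F.ut t) (F.Dx F.jCurv t) := by
  have hux := F.mem_ux
  have hvar : l2Inner (F.ux t) (F.Dt F.jCurv t) = l2Inner ((3 : ℝ) • F.Dt F.ux t) (F.jCurv t) :=
    l2Inner_congr fun x => by
      unfold jCurv
      rw [hRt _ hux _ (F.mem_J _ hux) _ (F.mem_J _ hux), F.J_par_t _ hux, inner_add_right,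
        inner_add_right, Pi.smul_apply, real_inner_smul_left]
      exact inner_variation_jCurv t x hRJ _ _
  rw [hvar, l2Inner_smul_left, F.torsion, l2Inner_Dx_left F.mem_ut F.mem_jCurv]
  ring

lemma hasDerivAt_energy3 (hRt : F.IsParallelCurvature F.Dt) (hRJ : F.RCommutesJ) (t : ℝ) :
    HasDerivAt F.energy3 (l2Inner (F.ut t) (F.gradEnergy3 t)) t := by
  have hw := hasDerivAt_l2Inner (F.mem_Dx _ F.mem_ux) (F.mem_Dx _ F.mem_ux) t
  have hQ := hasDerivAt_l2Inner F.mem_ux F.mem_jCurv t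
  refine (hw.sub (hQ.const_mul (1 / 4 : ℝ))).congr_deriv ?_
  rw [l2Inner_comm (F.Dx F.ux t), l2Inner_Dt_Dx_ux, l2Inner_Dt_jCurv hRt hRJ,
    l2Inner_gradEnergy3 (continuous_slice F.mem_ut t)]
  ring

lemma l2Inner_J_Dx_ux_gradEnergy3 (hRx : F.IsParallelCurvature F.Dx) (hRJ : F.RCommutesJ)
    (t : ℝ) : l2Inner (fun x => F.J t x (F.Dx F.ux t x)) (F.gradEnergy3 t) = 0 := by
  have hux := F.mem_ux
  have hw := F.mem_Dx _ hux
  have hJw := F.mem_J _ hw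
  have h3 : l2Inner (fun x => F.J t x (F.Dx F.ux t x)) (F.Dx (F.Dx (F.Dx F.ux)) t) = 0 := by
    rw [← neg_eq_zero, ← l2Inner_Dx_left hJw (F.mem_Dx _ hw)]
    exact l2Inner_eq_zero fun x => by rw [F.J_par_x _ hw, inner_J_self]
  have hQ : l2Inner (fun x => F.J t x (F.Dx F.ux t x)) (F.Dx F.jCurv t)
      = l2Inner ((-2 : ℝ) • fun x => F.J t x (F.Dx F.ux t x)) (F.dxCurv t) :=
    l2Inner_congr fun x => by
      unfold jCurv
      rw [hRx _ hux _ (F.mem_J _ hux) _ (F.mem_J _ hux), F.J_par_x _ hux, inner_add_right,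
        inner_add_right, inner_J_variation_jCurv t x hRJ, Pi.smul_apply, real_inner_smul_left]
      rfl
  rw [l2Inner_gradEnergy3 (continuous_slice hJw t), h3, hQ, l2Inner_smul_left]
  ring

lemma l2Inner_Dx_Dx_ux_add_half_jCurv_gradEnergy3 (hRx : F.IsParallelCurvature F.Dx) (t : ℝ) :
    l2Inner (F.Dx (F.Dx F.ux) t + (1 / 2 : ℝ) • F.jCurv t) (F.gradEnergy3 t)
      = l2Inner (F.dxCurv t) (F.jCurv t) := by
  have hw2 := F.mem_Dx _ (F.mem_Dx _ F.mem_ux)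
  have hQ := F.mem_jCurv
  have h23 : l2Inner (F.Dx (F.Dx F.ux) t) (F.Dx (F.Dx (F.Dx F.ux)) t) = 0 := by
    rw [l2Inner_comm, l2Inner_Dx_self hw2]
  have h2Q : l2Inner (F.Dx (F.Dx F.ux) t) (F.Dx F.jCurv t)
      = -l2Inner (F.jCurv t) (F.Dx (F.Dx (F.Dx F.ux)) t) := by
    rw [l2Inner_comm, l2Inner_Dx_left hQ hw2]
  have hQQ : l2Inner (F.jCurv t) (F.Dx F.jCurv t) = 0 := by
    rw [l2Inner_comm, l2Inner_Dx_self hQ]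
  rw [l2Inner_add_left (continuous_slice hw2 t) ((continuous_slice hQ t).const_smul _)
      (continuous_gradEnergy3 t), l2Inner_smul_left, l2Inner_gradEnergy3 (continuous_slice hw2 t),
    l2Inner_gradEnergy3 (continuous_slice hQ t), h23, l2Inner_Dx_Dx_ux_dxCurv hRx, h2Q, hQQ,
    l2Inner_comm (F.jCurv t) (F.dxCurv t)]
  ring

end KCovSystem

open CovSystem KCovSystem in
/-- On a locally Hermitian symmetric space, along any smooth solution of the
Schrödinger–Airy flow `uₜ = α J∇ₓuₓ + β(∇ₓ²uₓ + (1/2) R(uₓ, Juₓ)Juₓ)`, the functional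
`E₃(u) = ∫ |∇ₓuₓ|² dx − (1/4) ∫ ⟨uₓ, R(uₓ, Juₓ)Juₓ⟩ dx` satisfies
`dE₃/dt = β ∫ ⟨R(∇ₓuₓ, uₓ)uₓ, R(uₓ, Juₓ)Juₓ⟩ dx`. -/
theorem stmt13 {V : Type*} [NormedAddCommGroup V] [InnerProductSpace ℝ V]
    (F : KCovSystem V) (α β : ℝ)
    (hRx : ∀ a ∈ F.Sec, ∀ b ∈ F.Sec, ∀ c ∈ F.Sec, ∀ t x,
      F.Dx (fun t x => F.R t x (a t x) (b t x) (c t x)) t x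
        = F.R t x (F.Dx a t x) (b t x) (c t x) + F.R t x (a t x) (F.Dx b t x) (c t x)
          + F.R t x (a t x) (b t x) (F.Dx c t x))
    (hRt : ∀ a ∈ F.Sec, ∀ b ∈ F.Sec, ∀ c ∈ F.Sec, ∀ t x,
      F.Dt (fun t x => F.R t x (a t x) (b t x) (c t x)) t x
        = F.R t x (F.Dt a t x) (b t x) (c t x) + F.R t x (a t x) (F.Dt b t x) (c t x)
          + F.R t x (a t x) (b t x) (F.Dt c t x))
    (hRJ : ∀ t x a b c d, ⟪F.R t x a b c, F.J t x d⟫ = -⟪F.R t x a b (F.J t x c), d⟫)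
    (hflow : ∀ t x, F.ut t x
      = α • F.J t x (F.Dx F.ux t x)
        + β • (F.Dx (F.Dx F.ux) t x
          + (1 / 2 : ℝ) • F.R t x (F.ux t x) (F.J t x (F.ux t x)) (F.J t x (F.ux t x)))) :
    ∀ t : ℝ,
      HasDerivAt
        (fun τ =>
          (∫ x in (0 : ℝ)..(2 * π), ⟪F.Dx F.ux τ x, F.Dx F.ux τ x⟫)
            - (1 / 4 : ℝ) * ∫ x in (0 : ℝ)..(2 * π),
                ⟪F.ux τ x, F.R τ x (F.ux τ x) (F.J τ x (F.ux τ x)) (F.J τ x (F.ux τ x))⟫)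
        (β * ∫ x in (0 : ℝ)..(2 * π),
          ⟪F.R t x (F.Dx F.ux t x) (F.ux t x) (F.ux t x),
            F.R t x (F.ux t x) (F.J t x (F.ux t x)) (F.J t x (F.ux t x))⟫) t := by
  intro t
  have hJw := continuous_slice (F.mem_J _ (F.mem_Dx _ F.mem_ux)) t
  have hairy := (continuous_slice (F.mem_Dx _ (F.mem_Dx _ F.mem_ux)) t).add
    ((continuous_slice F.mem_jCurv t).const_smul (1 / 2 : ℝ))
  have hut : F.ut t = α • (fun x => F.J t x (F.Dx F.ux t x))
      + β • (F.Dx (F.Dx F.ux) t + (1 / 2 : ℝ) • F.jCurv t) := funext (hflow t)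
  have h := hasDerivAt_energy3 hRt hRJ t
  rw [hut, l2Inner_add_left (hJw.const_smul α) (hairy.const_smul β) (continuous_gradEnergy3 t),
    l2Inner_smul_left, l2Inner_smul_left, l2Inner_J_Dx_ux_gradEnergy3 hRx hRJ,
    l2Inner_Dx_Dx_ux_add_half_jCurv_gradEnergy3 hRx, mul_zero, zero_add] at h
  exact h
end

section
/- Let u be a smooth map from S¹ × (0,T) into a Kähler manifold N with ∇J = 0, satisfying ∇_t u_x = ∇_x u_t. Then d/dt ∫_{S¹} ⟨∇_x u_x, J u_x⟩ dx = 2∫ ⟨u_t, J∇_x² u_x⟩ dx − ∫ ⟨u_t, R(u_x, Ju_x)u_x⟩ dx. -/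
open scoped RealInnerProductSpace
open Real

/-!
Differentiate under the integral sign. Torsion-freeness and the commutation formula turn
`∇ₜ∇ₓuₓ` into `∇ₓ²uₜ + R(uₜ, uₓ)uₓ`, and `∇J = 0` turns `∇ₜ(Juₓ)` into `J∇ₓuₜ`. Since `J` is
parallel and skew-adjoint, periodic integration by parts gives
`∫⟨∇ₓ²uₜ, Juₓ⟩ = −∫⟨∇ₓuₜ, J∇ₓuₓ⟩ = ∫⟨uₜ, J∇ₓ²uₓ⟩`, and the curvature symmetries rewrite
`⟨R(uₜ, uₓ)uₓ, Juₓ⟩` as `−⟨uₜ, R(uₓ, Juₓ)uₓ⟩`.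
-/

namespace CovSystem

variable {V : Type*} [NormedAddCommGroup V] [InnerProductSpace ℝ V] (F : CovSystem V)

theorem continuous_apply_of_mem {s : ℝ → ℝ → V} (hs : s ∈ F.Sec) (t : ℝ) :
    Continuous fun x => s t x :=
  (F.cont s hs).comp (Continuous.prodMk_right t)

theorem intervalIntegrable_inner {s r : ℝ → ℝ → V} (hs : s ∈ F.Sec) (hr : r ∈ F.Sec)
    (t : ℝ) : IntervalIntegrable (fun x => ⟪s t x, r t x⟫) MeasureTheory.volume 0 (2 * π) :=
  ((F.continuous_apply_of_mem hs t).inner (F.continuous_apply_of_mem hr t)).intervalIntegrable _ _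

theorem integral_inner_Dx_eq_neg {s r : ℝ → ℝ → V} (hs : s ∈ F.Sec) (hr : r ∈ F.Sec)
    (t : ℝ) :
    ∫ x in (0 : ℝ)..(2 * π), ⟪F.Dx s t x, r t x⟫
      = -∫ x in (0 : ℝ)..(2 * π), ⟪s t x, F.Dx r t x⟫ := by
  have hDs := F.mem_Dx s hs
  have hDr := F.mem_Dx r hr
  have hFTC := intervalIntegral.integral_eq_sub_of_hasDerivAt
    (fun x _ => F.metric_x s hs r hr t x)
    ((F.intervalIntegrable_inner hDs hr t).add (F.intervalIntegrable_inner hs hDr t))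
  have hs_per : s t (2 * π) = s t 0 := by simpa using F.periodic s hs t 0
  have hr_per : r t (2 * π) = r t 0 := by simpa using F.periodic r hr t 0
  rw [hs_per, hr_per, sub_self, intervalIntegral.integral_add
    (F.intervalIntegrable_inner hDs hr t) (F.intervalIntegrable_inner hs hDr t)] at hFTC
  linarith

theorem inner_R_self_right (t x : ℝ) (a b d : V) :
    ⟪F.R t x a b b, d⟫ = -⟪a, F.R t x b d b⟫ := by
  rw [F.R_pair, F.R_skew, real_inner_comm]

end CovSystem

namespace KCovSystem

variable {V : Type*} [NormedAddCommGroup V] [InnerProductSpace ℝ V] (F : KCovSystem V)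

theorem integral_inner_Dx_J_eq_neg {s r : ℝ → ℝ → V} (hs : s ∈ F.Sec) (hr : r ∈ F.Sec)
    (t : ℝ) :
    ∫ x in (0 : ℝ)..(2 * π), ⟪F.Dx s t x, F.J t x (r t x)⟫
      = -∫ x in (0 : ℝ)..(2 * π), ⟪s t x, F.J t x (F.Dx r t x)⟫ := by
  simp only [F.integral_inner_Dx_eq_neg hs (F.mem_J r hr) t, F.J_par_x r hr]

theorem inner_Dt_Dx_ux_J_ux_add (t x : ℝ) :
    ⟪F.Dt (F.Dx F.ux) t x, F.J t x (F.ux t x)⟫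
        + ⟪F.Dx F.ux t x, F.Dt (fun t x => F.J t x (F.ux t x)) t x⟫
      = ⟪F.Dx (F.Dx F.ut) t x, F.J t x (F.ux t x)⟫
        - ⟪F.ut t x, F.R t x (F.ux t x) (F.J t x (F.ux t x)) (F.ux t x)⟫
        - ⟪F.Dx F.ut t x, F.J t x (F.Dx F.ux t x)⟫ := by
  have hJ : ⟪F.Dx F.ux t x, F.J t x (F.Dx F.ut t x)⟫
      = -⟪F.Dx F.ut t x, F.J t x (F.Dx F.ux t x)⟫ := by
    rw [real_inner_comm, F.J_skew]
  rw [F.Dt_Dx_ux, F.Dt_J_ux, inner_add_left, F.inner_R_self_right, hJ]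
  ring

end KCovSystem

theorem stmt19_general {V : Type*} [NormedAddCommGroup V] [InnerProductSpace ℝ V]
    (F : KCovSystem V) :
    ∀ t : ℝ,
      HasDerivAt
        (fun τ => ∫ x in (0 : ℝ)..(2 * π), ⟪F.Dx F.ux τ x, F.J τ x (F.ux τ x)⟫)
        (2 * (∫ x in (0 : ℝ)..(2 * π), ⟪F.ut t x, F.J t x (F.Dx (F.Dx F.ux) t x)⟫)
          - ∫ x in (0 : ℝ)..(2 * π),
              ⟪F.ut t x, F.R t x (F.ux t x) (F.J t x (F.ux t x)) (F.ux t x)⟫) t := by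
  intro t
  have hux := F.mem_ux
  have hut := F.mem_ut
  have hDxux := F.mem_Dx _ hux
  have hDxut := F.mem_Dx _ hut
  have hJux := F.mem_J _ hux
  have hfirst := F.integral_inner_Dx_J_eq_neg hut hDxux t
  have hsecond : ∫ x in (0 : ℝ)..(2 * π), ⟪F.Dx (F.Dx F.ut) t x, F.J t x (F.ux t x)⟫
      = ∫ x in (0 : ℝ)..(2 * π), ⟪F.ut t x, F.J t x (F.Dx (F.Dx F.ux) t x)⟫ := by
    rw [F.integral_inner_Dx_J_eq_neg hDxut hux, hfirst, neg_neg]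
  convert F.dint _ hDxux _ hJux t using 1
  simp only [F.inner_Dt_Dx_ux_J_ux_add]
  rw [intervalIntegral.integral_sub
      ((F.intervalIntegrable_inner (F.mem_Dx _ hDxut) hJux t).sub
        (F.intervalIntegrable_inner hut (F.mem_R _ hux _ hJux _ hux) t))
      (F.intervalIntegrable_inner hDxut (F.mem_J _ hDxux) t),
    intervalIntegral.integral_sub
      (F.intervalIntegrable_inner (F.mem_Dx _ hDxut) hJux t)
      (F.intervalIntegrable_inner hut (F.mem_R _ hux _ hJux _ hux) t),
    hsecond, hfirst]
  ring

/-- For a smooth map `u : S¹ × (0,T) → N` into a Kähler manifold with `∇J = 0`,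
`d/dt ∫ ⟨∇ₓuₓ, Juₓ⟩ dx = 2∫⟨uₜ, J∇ₓ²uₓ⟩ dx − ∫⟨uₜ, R(uₓ, Juₓ)uₓ⟩ dx`. -/
theorem stmt19 {V : Type*} [NormedAddCommGroup V] [InnerProductSpace ℝ V]
    (F : KCovSystem V)
    (hRJ : ∀ t x a b c d, ⟪F.R t x a b c, F.J t x d⟫ = -⟪F.R t x a b (F.J t x c), d⟫) :
    ∀ t : ℝ,
      HasDerivAt
        (fun τ => ∫ x in (0 : ℝ)..(2 * π), ⟪F.Dx F.ux τ x, F.J τ x (F.ux τ x)⟫)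
        (2 * (∫ x in (0 : ℝ)..(2 * π), ⟪F.ut t x, F.J t x (F.Dx (F.Dx F.ux) t x)⟫)
          - ∫ x in (0 : ℝ)..(2 * π),
              ⟪F.ut t x, F.R t x (F.ux t x) (F.J t x (F.ux t x)) (F.ux t x)⟫) t :=
  stmt19_general F
end
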